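/- Fix ρ > 0, a tensor X ∈ ℝ^{I₁×I₂×I₃}, matrices C_n ∈ ℝ^{d_n × ∏_{j≠n} d_j} for n = 1,2,3, and column-orthonormal matrices U ∈ ℝ^{I₁×d₁}, V ∈ ℝ^{I₂×d₂}, W ∈ ℝ^{I₃×d₃}. Consider h(G) = Σ_{n=1}^{3} (ρ/2)‖G_{(n)} − C_n‖²_F + (1/2)‖X − G ×₁ U ×₂ V ×₃ W‖²_F over G ∈ ℝ^{d₁×d₂×d₃}. Then h has the unique minimizer G = (1/(1+3ρ)) (A + ρ B), where A = X ×₁ Uᵀ ×₂ Vᵀ ×₃ Wᵀ and B = Σ_{n=1}^{3} refold_n(C_n). -/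

import Mathlib

open scoped BigOperators
open Matrix Kronecker Filter Topology

/-- A third-order real tensor of size `I₁ × I₂ × I₃`. -/
abbrev Tensor (I₁ I₂ I₃ : ℕ) : Type := Fin I₁ → Fin I₂ → Fin I₃ → ℝ

namespace Tensor

variable {I₁ I₂ I₃ J d₁ d₂ d₃ : ℕ}

/-- The 1-mode product `X ×₁ U`. -/
noncomputable def mode1 (X : Tensor I₁ I₂ I₃) (U : Matrix (Fin J) (Fin I₁) ℝ) : Tensor J I₂ I₃ :=
  fun j i₂ i₃ => ∑ i₁, X i₁ i₂ i₃ * U j i₁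

/-- The 2-mode product `X ×₂ V`. -/
noncomputable def mode2 (X : Tensor I₁ I₂ I₃) (V : Matrix (Fin J) (Fin I₂) ℝ) : Tensor I₁ J I₃ :=
  fun i₁ j i₃ => ∑ i₂, X i₁ i₂ i₃ * V j i₂

/-- The 3-mode product `X ×₃ W`. -/
noncomputable def mode3 (X : Tensor I₁ I₂ I₃) (W : Matrix (Fin J) (Fin I₃) ℝ) : Tensor I₁ I₂ J :=
  fun i₁ i₂ j => ∑ i₃, X i₁ i₂ i₃ * W j i₃

/-- `G ×₁ U ×₂ V ×₃ W`. -/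
noncomputable def tucker (G : Tensor d₁ d₂ d₃) (U : Matrix (Fin I₁) (Fin d₁) ℝ)
    (V : Matrix (Fin I₂) (Fin d₂) ℝ) (W : Matrix (Fin I₃) (Fin d₃) ℝ) : Tensor I₁ I₂ I₃ :=
  mode3 (mode2 (mode1 G U) V) W

/-- Mode-1 unfolding `X₍₁₎`; columns are indexed by pairs `(i₃, i₂)` (with `i₂` varying fastest,
matching `j = 1 + (i₂ - 1) + (i₃ - 1)·I₂`). -/
def unfold1 (X : Tensor I₁ I₂ I₃) : Matrix (Fin I₁) (Fin I₃ × Fin I₂) ℝ :=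
  fun i₁ p => X i₁ p.2 p.1

/-- Mode-2 unfolding `X₍₂₎`; columns indexed by `(i₃, i₁)` with `i₁` fastest. -/
def unfold2 (X : Tensor I₁ I₂ I₃) : Matrix (Fin I₂) (Fin I₃ × Fin I₁) ℝ :=
  fun i₂ p => X p.2 i₂ p.1

/-- Mode-3 unfolding `X₍₃₎`; columns indexed by `(i₂, i₁)` with `i₁` fastest. -/
def unfold3 (X : Tensor I₁ I₂ I₃) : Matrix (Fin I₃) (Fin I₂ × Fin I₁) ℝ :=
  fun i₃ p => X p.2 p.1 i₃

/-- Refolding of a mode-1 unfolded matrix back into a tensor. -/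
def refold1 (M : Matrix (Fin d₁) (Fin d₃ × Fin d₂) ℝ) : Tensor d₁ d₂ d₃ :=
  fun i₁ i₂ i₃ => M i₁ (i₃, i₂)

/-- Refolding of a mode-2 unfolded matrix back into a tensor. -/
def refold2 (M : Matrix (Fin d₂) (Fin d₃ × Fin d₁) ℝ) : Tensor d₁ d₂ d₃ :=
  fun i₁ i₂ i₃ => M i₂ (i₃, i₁)

/-- Refolding of a mode-3 unfolded matrix back into a tensor. -/
def refold3 (M : Matrix (Fin d₃) (Fin d₂ × Fin d₁) ℝ) : Tensor d₁ d₂ d₃ :=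
  fun i₁ i₂ i₃ => M i₃ (i₂, i₁)

/-- Tensor inner product `⟨A, B⟩`. -/
def tinner (A B : Tensor I₁ I₂ I₃) : ℝ := ∑ i₁, ∑ i₂, ∑ i₃, A i₁ i₂ i₃ * B i₁ i₂ i₃

/-- Squared Frobenius norm `‖X‖²_F`. -/
def frobSq (X : Tensor I₁ I₂ I₃) : ℝ := ∑ i₁, ∑ i₂, ∑ i₃, (X i₁ i₂ i₃) ^ 2

/-- Frobenius norm `‖X‖_F`. -/
noncomputable def frob (X : Tensor I₁ I₂ I₃) : ℝ := Real.sqrt (frobSq X)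

/-- Hadamard (entrywise) product of tensors. -/
def hadamard (A B : Tensor I₁ I₂ I₃) : Tensor I₁ I₂ I₃ := fun i₁ i₂ i₃ => A i₁ i₂ i₃ * B i₁ i₂ i₃

/-- `P_Ω(X)`: agrees with `X` on `Ω` and is zero elsewhere. -/
def proj (Ω : Set (Fin I₁ × Fin I₂ × Fin I₃)) [DecidablePred (· ∈ Ω)] (X : Tensor I₁ I₂ I₃) :
    Tensor I₁ I₂ I₃ := fun i₁ i₂ i₃ => if (i₁, i₂, i₃) ∈ Ω then X i₁ i₂ i₃ else 0

/-- `P_Ω^⊥(X) = X - P_Ω(X)`. -/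
def projc (Ω : Set (Fin I₁ × Fin I₂ × Fin I₃)) [DecidablePred (· ∈ Ω)] (X : Tensor I₁ I₂ I₃) :
    Tensor I₁ I₂ I₃ := X - proj Ω X

/-- The 0/1 indicator tensor of an index set `Ω`. -/
def indic (Ω : Set (Fin I₁ × Fin I₂ × Fin I₃)) [DecidablePred (· ∈ Ω)] : Tensor I₁ I₂ I₃ :=
  fun i₁ i₂ i₃ => if (i₁, i₂, i₃) ∈ Ω then 1 else 0

end Tensor

namespace MatrixAux

/-- The singular values of a real matrix `M`: square roots of the eigenvalues of `MᴴM`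
(for real matrices `Mᴴ = Mᵀ`). -/
noncomputable def singularValues {m n : Type*} [Fintype m] [Fintype n] [DecidableEq n]
    (M : Matrix m n ℝ) : n → ℝ :=
  fun i => Real.sqrt (((show (Mᵀ * M).IsHermitian by
    rw [← Matrix.conjTranspose_eq_transpose_of_trivial]
    exact Matrix.isHermitian_conjTranspose_mul_self M)).eigenvalues i)

/-- The Schatten `p`-norm of a real matrix, `(∑ᵢ σᵢᵖ)^(1/p)`. -/
noncomputable def schattenNorm (p : ℝ) {m n : Type*} [Fintype m] [Fintype n] [DecidableEq n]
    (M : Matrix m n ℝ) : ℝ :=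
  (∑ i, singularValues M i ^ p) ^ (1 / p)

/-- The trace norm (nuclear norm) of a real matrix: the sum of its singular values. -/
noncomputable def traceNorm {m n : Type*} [Fintype m] [Fintype n] [DecidableEq n]
    (M : Matrix m n ℝ) : ℝ :=
  ∑ i, singularValues M i

/-- Squared Frobenius norm of a matrix. -/
def frobSq {m n : Type*} [Fintype m] [Fintype n] (M : Matrix m n ℝ) : ℝ := ∑ i, ∑ j, (M i j) ^ 2

/-- Frobenius norm of a matrix. -/
noncomputable def frob {m n : Type*} [Fintype m] [Fintype n] (M : Matrix m n ℝ) : ℝ :=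
  Real.sqrt (frobSq M)

/-- Frobenius (trace) inner product of matrices. -/
def minner {m n : Type*} [Fintype m] [Fintype n] (A B : Matrix m n ℝ) : ℝ :=
  ∑ i, ∑ j, A i j * B i j

end MatrixAux

/-- The Schatten `p`-norm of a third-order tensor: the average of the Schatten `p`-norms of its
three mode-`n` unfoldings. -/
noncomputable def tensorSchattenNorm (p : ℝ) {I₁ I₂ I₃ : ℕ} (X : Tensor I₁ I₂ I₃) : ℝ :=
  (MatrixAux.schattenNorm p (Tensor.unfold1 X) + MatrixAux.schattenNorm p (Tensor.unfold2 X)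
    + MatrixAux.schattenNorm p (Tensor.unfold3 X)) / 3

/-!
Unfolding only rearranges entries, so `‖G₍ₙ₎ - Cₙ‖ = ‖G - refoldₙ Cₙ‖`. Since `U`, `V`, `W` have
orthonormal columns, `G ↦ G ×₁ U ×₂ V ×₃ W` is an isometry whose adjoint is
`X ↦ X ×₁ Uᵀ ×₂ Vᵀ ×₃ Wᵀ`, hence `‖X - G ×₁ U ×₂ V ×₃ W‖² = ‖G - A‖² + const`. So up to a constant
`h` is the weighted sum of squared distances from `G` to `A` (weight `1/2`) and to the three
`refoldₙ Cₙ` (weight `ρ/2` each), which equals `h(G⋆) + (1 + 3ρ)/2 · ‖G - G⋆‖²` for the weighted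
mean `G⋆`.
-/

namespace MatrixAux

variable {m n k : Type*} [Fintype m] [Fintype n] [Fintype k]

lemma minner_eq_trace (A B : Matrix m n ℝ) : minner A B = trace (Aᵀ * B) := by
  simp only [minner, trace, diag_apply, mul_apply, transpose_apply]
  exact Finset.sum_comm

lemma frobSq_eq_minner (A : Matrix m n ℝ) : frobSq A = minner A A := by
  simp only [frobSq, minner, sq]

lemma minner_mul_left (U : Matrix m n ℝ) (A : Matrix n k ℝ) (B : Matrix m k ℝ) :
    minner (U * A) B = minner A (Uᵀ * B) := by
  rw [minner_eq_trace, minner_eq_trace, transpose_mul, Matrix.mul_assoc]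

lemma minner_mul_mul_of_transpose_mul_eq_one [DecidableEq n] {U : Matrix m n ℝ} (hU : Uᵀ * U = 1)
    (A B : Matrix n k ℝ) : minner (U * A) (U * B) = minner A B := by
  rw [minner_mul_left, ← Matrix.mul_assoc, hU, Matrix.one_mul]

end MatrixAux

namespace Tensor

open MatrixAux

variable {I₁ I₂ I₃ J d₁ d₂ d₃ : ℕ}

lemma frobSq_eq_tinner (A : Tensor I₁ I₂ I₃) : frobSq A = tinner A A := by
  simp only [frobSq, tinner, sq]

lemma tinner_comm (A B : Tensor I₁ I₂ I₃) : tinner A B = tinner B A := by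
  simp only [tinner, mul_comm]

lemma frobSq_sub (A B : Tensor I₁ I₂ I₃) :
    frobSq (A - B) = frobSq A - 2 * tinner A B + frobSq B := by
  simp only [frobSq, tinner, Pi.sub_apply, sub_sq, Finset.sum_add_distrib,
    Finset.sum_sub_distrib, Finset.mul_sum, mul_assoc]

lemma frobSq_nonneg (A : Tensor I₁ I₂ I₃) : 0 ≤ frobSq A := by
  unfold frobSq
  positivity

lemma frobSq_eq_zero_iff {A : Tensor I₁ I₂ I₃} : frobSq A = 0 ↔ A = 0 := by
  simp (disch := intros; positivity) only [frobSq, Finset.sum_eq_zero_iff_of_nonneg,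
    Finset.mem_univ, forall_const, sq_eq_zero_iff, funext_iff, Pi.zero_apply]

lemma tinner_eq_minner_unfold1 (A B : Tensor I₁ I₂ I₃) :
    tinner A B = minner (unfold1 A) (unfold1 B) := by
  simp only [tinner, minner, unfold1, Fintype.sum_prod_type]
  exact Finset.sum_congr rfl fun _ _ => Finset.sum_comm

lemma tinner_eq_minner_unfold2 (A B : Tensor I₁ I₂ I₃) :
    tinner A B = minner (unfold2 A) (unfold2 B) := by
  simp only [tinner, minner, unfold2, Fintype.sum_prod_type]
  rw [Finset.sum_comm]
  exact Finset.sum_congr rfl fun _ _ => Finset.sum_comm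

lemma tinner_eq_minner_unfold3 (A B : Tensor I₁ I₂ I₃) :
    tinner A B = minner (unfold3 A) (unfold3 B) := by
  simp only [tinner, minner, unfold3, Fintype.sum_prod_type]
  rw [Finset.sum_comm, Finset.sum_congr rfl fun _ _ => Finset.sum_comm, Finset.sum_comm]

lemma frobSq_unfold1 (A : Tensor I₁ I₂ I₃) : MatrixAux.frobSq (unfold1 A) = frobSq A := by
  rw [MatrixAux.frobSq_eq_minner, ← tinner_eq_minner_unfold1, frobSq_eq_tinner]

lemma frobSq_unfold2 (A : Tensor I₁ I₂ I₃) : MatrixAux.frobSq (unfold2 A) = frobSq A := by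
  rw [MatrixAux.frobSq_eq_minner, ← tinner_eq_minner_unfold2, frobSq_eq_tinner]

lemma frobSq_unfold3 (A : Tensor I₁ I₂ I₃) : MatrixAux.frobSq (unfold3 A) = frobSq A := by
  rw [MatrixAux.frobSq_eq_minner, ← tinner_eq_minner_unfold3, frobSq_eq_tinner]

lemma frobSq_unfold1_sub (G : Tensor d₁ d₂ d₃) (C : Matrix (Fin d₁) (Fin d₃ × Fin d₂) ℝ) :
    MatrixAux.frobSq (unfold1 G - C) = frobSq (G - refold1 C) :=
  frobSq_unfold1 (G - refold1 C)

lemma frobSq_unfold2_sub (G : Tensor d₁ d₂ d₃) (C : Matrix (Fin d₂) (Fin d₃ × Fin d₁) ℝ) :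
    MatrixAux.frobSq (unfold2 G - C) = frobSq (G - refold2 C) :=
  frobSq_unfold2 (G - refold2 C)

lemma frobSq_unfold3_sub (G : Tensor d₁ d₂ d₃) (C : Matrix (Fin d₃) (Fin d₂ × Fin d₁) ℝ) :
    MatrixAux.frobSq (unfold3 G - C) = frobSq (G - refold3 C) :=
  frobSq_unfold3 (G - refold3 C)

lemma unfold1_mode1 (G : Tensor I₁ I₂ I₃) (U : Matrix (Fin J) (Fin I₁) ℝ) :
    unfold1 (mode1 G U) = U * unfold1 G := by
  ext j p
  simp only [unfold1, mode1, mul_apply, mul_comm]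

lemma unfold2_mode2 (G : Tensor I₁ I₂ I₃) (V : Matrix (Fin J) (Fin I₂) ℝ) :
    unfold2 (mode2 G V) = V * unfold2 G := by
  ext j p
  simp only [unfold2, mode2, mul_apply, mul_comm]

lemma unfold3_mode3 (G : Tensor I₁ I₂ I₃) (W : Matrix (Fin J) (Fin I₃) ℝ) :
    unfold3 (mode3 G W) = W * unfold3 G := by
  ext j p
  simp only [unfold3, mode3, mul_apply, mul_comm]

lemma tinner_mode1_left (G : Tensor I₁ I₂ I₃) (U : Matrix (Fin J) (Fin I₁) ℝ)
    (X : Tensor J I₂ I₃) : tinner (mode1 G U) X = tinner G (mode1 X Uᵀ) := by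
  rw [tinner_eq_minner_unfold1, tinner_eq_minner_unfold1, unfold1_mode1, unfold1_mode1,
    minner_mul_left]

lemma tinner_mode2_left (G : Tensor I₁ I₂ I₃) (V : Matrix (Fin J) (Fin I₂) ℝ)
    (X : Tensor I₁ J I₃) : tinner (mode2 G V) X = tinner G (mode2 X Vᵀ) := by
  rw [tinner_eq_minner_unfold2, tinner_eq_minner_unfold2, unfold2_mode2, unfold2_mode2,
    minner_mul_left]

lemma tinner_mode3_left (G : Tensor I₁ I₂ I₃) (W : Matrix (Fin J) (Fin I₃) ℝ)
    (X : Tensor I₁ I₂ J) : tinner (mode3 G W) X = tinner G (mode3 X Wᵀ) := by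
  rw [tinner_eq_minner_unfold3, tinner_eq_minner_unfold3, unfold3_mode3, unfold3_mode3,
    minner_mul_left]

lemma tinner_mode1_mode1 {U : Matrix (Fin J) (Fin I₁) ℝ} (hU : Uᵀ * U = 1)
    (G G' : Tensor I₁ I₂ I₃) : tinner (mode1 G U) (mode1 G' U) = tinner G G' := by
  rw [tinner_eq_minner_unfold1, unfold1_mode1, unfold1_mode1,
    minner_mul_mul_of_transpose_mul_eq_one hU, ← tinner_eq_minner_unfold1]

lemma tinner_mode2_mode2 {V : Matrix (Fin J) (Fin I₂) ℝ} (hV : Vᵀ * V = 1)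
    (G G' : Tensor I₁ I₂ I₃) : tinner (mode2 G V) (mode2 G' V) = tinner G G' := by
  rw [tinner_eq_minner_unfold2, unfold2_mode2, unfold2_mode2,
    minner_mul_mul_of_transpose_mul_eq_one hV, ← tinner_eq_minner_unfold2]

lemma tinner_mode3_mode3 {W : Matrix (Fin J) (Fin I₃) ℝ} (hW : Wᵀ * W = 1)
    (G G' : Tensor I₁ I₂ I₃) : tinner (mode3 G W) (mode3 G' W) = tinner G G' := by
  rw [tinner_eq_minner_unfold3, unfold3_mode3, unfold3_mode3,
    minner_mul_mul_of_transpose_mul_eq_one hW, ← tinner_eq_minner_unfold3]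

lemma tucker_eq_mode1_mode2_mode3 (G : Tensor d₁ d₂ d₃) (U : Matrix (Fin I₁) (Fin d₁) ℝ)
    (V : Matrix (Fin I₂) (Fin d₂) ℝ) (W : Matrix (Fin I₃) (Fin d₃) ℝ) :
    tucker G U V W = mode1 (mode2 (mode3 G W) V) U := by
  funext i₁ i₂ i₃
  simp only [tucker, mode1, mode2, mode3, Finset.sum_mul]
  rw [Finset.sum_comm_cycle]
  refine Finset.sum_congr rfl fun _ _ => ?_
  rw [Finset.sum_comm]
  exact Finset.sum_congr rfl fun _ _ => Finset.sum_congr rfl fun _ _ => by ring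

lemma tinner_tucker_left (G : Tensor d₁ d₂ d₃) (U : Matrix (Fin I₁) (Fin d₁) ℝ)
    (V : Matrix (Fin I₂) (Fin d₂) ℝ) (W : Matrix (Fin I₃) (Fin d₃) ℝ) (X : Tensor I₁ I₂ I₃) :
    tinner (tucker G U V W) X = tinner G (tucker X Uᵀ Vᵀ Wᵀ) := by
  rw [tucker, tinner_mode3_left, tinner_mode2_left, tinner_mode1_left,
    tucker_eq_mode1_mode2_mode3]

lemma frobSq_tucker {U : Matrix (Fin I₁) (Fin d₁) ℝ} {V : Matrix (Fin I₂) (Fin d₂) ℝ}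
    {W : Matrix (Fin I₃) (Fin d₃) ℝ} (hU : Uᵀ * U = 1) (hV : Vᵀ * V = 1) (hW : Wᵀ * W = 1)
    (G : Tensor d₁ d₂ d₃) : frobSq (tucker G U V W) = frobSq G := by
  rw [frobSq_eq_tinner, frobSq_eq_tinner, tucker, tinner_mode3_mode3 hW, tinner_mode2_mode2 hV,
    tinner_mode1_mode1 hU]

lemma frobSq_sub_tucker {U : Matrix (Fin I₁) (Fin d₁) ℝ} {V : Matrix (Fin I₂) (Fin d₂) ℝ}
    {W : Matrix (Fin I₃) (Fin d₃) ℝ} (hU : Uᵀ * U = 1) (hV : Vᵀ * V = 1) (hW : Wᵀ * W = 1)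
    (X : Tensor I₁ I₂ I₃) (G : Tensor d₁ d₂ d₃) :
    frobSq (X - tucker G U V W)
      = frobSq (G - tucker X Uᵀ Vᵀ Wᵀ) + frobSq X - frobSq (tucker X Uᵀ Vᵀ Wᵀ) := by
  rw [frobSq_sub, frobSq_sub, tinner_comm, tinner_tucker_left, frobSq_tucker hU hV hW]
  ring

lemma weighted_frobSq_sub (ρ : ℝ) (hρ : 1 + 3 * ρ ≠ 0) (A B₁ B₂ B₃ G M : Tensor I₁ I₂ I₃)
    (hM : M = (1 / (1 + 3 * ρ)) • (A + ρ • (B₁ + B₂ + B₃))) :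
    ρ / 2 * (frobSq (G - B₁) + frobSq (G - B₂) + frobSq (G - B₃)) + 1 / 2 * frobSq (G - A)
      = ρ / 2 * (frobSq (M - B₁) + frobSq (M - B₂) + frobSq (M - B₃)) + 1 / 2 * frobSq (M - A)
        + (1 + 3 * ρ) / 2 * frobSq (G - M) := by
  subst hM
  simp only [frobSq, Finset.mul_sum, ← Finset.sum_add_distrib]
  refine Finset.sum_congr rfl fun _ _ => Finset.sum_congr rfl fun _ _ =>
    Finset.sum_congr rfl fun _ _ => ?_
  simp only [Pi.sub_apply, Pi.smul_apply, Pi.add_apply, smul_eq_mul]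
  have hρ' : 1 + ρ * 3 ≠ 0 := by rwa [mul_comm]
  field_simp
  ring

end Tensor

/-- The function
`h(G) = ∑ₙ (ρ/2)‖G₍ₙ₎ − Cₙ‖²_F + (1/2)‖X − G ×₁ U ×₂ V ×₃ W‖²_F`
has the unique minimizer `G = (1/(1+3ρ))(A + ρB)` where `A = X ×₁ Uᵀ ×₂ Vᵀ ×₃ Wᵀ` and
`B = ∑ₙ refoldₙ(Cₙ)`. -/
theorem core_update_unique_min {I₁ I₂ I₃ d₁ d₂ d₃ : ℕ} (ρ : ℝ) (hρ : 0 < ρ)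
    (X : Tensor I₁ I₂ I₃)
    (C₁ : Matrix (Fin d₁) (Fin d₃ × Fin d₂) ℝ)
    (C₂ : Matrix (Fin d₂) (Fin d₃ × Fin d₁) ℝ)
    (C₃ : Matrix (Fin d₃) (Fin d₂ × Fin d₁) ℝ)
    (U : Matrix (Fin I₁) (Fin d₁) ℝ) (V : Matrix (Fin I₂) (Fin d₂) ℝ)
    (W : Matrix (Fin I₃) (Fin d₃) ℝ)
    (hU : Uᵀ * U = 1) (hV : Vᵀ * V = 1) (hW : Wᵀ * W = 1) :
    let h : Tensor d₁ d₂ d₃ → ℝ := fun G =>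
      ρ / 2 * (MatrixAux.frobSq (Tensor.unfold1 G - C₁)
          + MatrixAux.frobSq (Tensor.unfold2 G - C₂)
          + MatrixAux.frobSq (Tensor.unfold3 G - C₃))
        + 1 / 2 * Tensor.frobSq (X - Tensor.tucker G U V W)
    let A : Tensor d₁ d₂ d₃ := Tensor.tucker X Uᵀ Vᵀ Wᵀ
    let B : Tensor d₁ d₂ d₃ := Tensor.refold1 C₁ + Tensor.refold2 C₂ + Tensor.refold3 C₃
    let Gstar : Tensor d₁ d₂ d₃ := (1 / (1 + 3 * ρ)) • (A + ρ • B)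
    (∀ G, h Gstar ≤ h G) ∧ ∀ G, h G = h Gstar → G = Gstar := by
  intro h A B Gstar
  have hpos : 0 < (1 + 3 * ρ) / 2 := by positivity
  have key : ∀ G, h G = h Gstar + (1 + 3 * ρ) / 2 * Tensor.frobSq (G - Gstar) := fun G => by
    simp only [h, Tensor.frobSq_unfold1_sub, Tensor.frobSq_unfold2_sub, Tensor.frobSq_unfold3_sub,
      Tensor.frobSq_sub_tucker hU hV hW]
    linarith [Tensor.weighted_frobSq_sub ρ (by positivity) A _ _ _ G Gstar rfl]
  refine ⟨fun G => ?_, fun G hG => ?_⟩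
  · rw [key G]
    exact le_add_of_nonneg_right (mul_nonneg hpos.le (Tensor.frobSq_nonneg _))
  · rw [key G, add_eq_left, mul_eq_zero_iff_left hpos.ne', Tensor.frobSq_eq_zero_iff] at hG
    exact sub_eq_zero.mp hG
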